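/- Under the setup of a {0,1}-valued mask m, poisoned points x' = (1-m)⊙x + m⊙t and x'ᵢ = (1-m)⊙xᵢ + m⊙t sharing the same trigger t, and RBF kernel K(u,v) = exp(-2γ‖u-v‖²) with γ > 0: if m⊙(t - xᵢ) ≠ 0, then K(x', x'ᵢ) > K(x', xᵢ). -/

import Mathlib

noncomputable def had {d : ℕ} (u v : EuclideanSpace ℝ (Fin d)) :
    EuclideanSpace ℝ (Fin d) := WithLp.toLp 2 (fun j => u j * v j)

noncomputable def onesVec (d : ℕ) : EuclideanSpace ℝ (Fin d) := WithLp.toLp 2 (fun _ => 1)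

/-!
Write `δ = m ⊙ (t - xᵢ)` and `a = (1 - m) ⊙ (x - xᵢ)`. Then `x' - x'ᵢ = a` and `x' - xᵢ = a + δ`.
For a `{0,1}` mask the supports of `a` and `δ` are disjoint, so `‖x' - xᵢ‖² = ‖a‖² + ‖δ‖² > ‖a‖²`,
and the RBF kernel is strictly decreasing in the squared distance.
-/

section Poisoning

variable {d : ℕ}

noncomputable def poison (m t x : EuclideanSpace ℝ (Fin d)) : EuclideanSpace ℝ (Fin d) :=
  had (onesVec d - m) x + had m t

lemma poison_sub_poison (m t x y : EuclideanSpace ℝ (Fin d)) :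
    poison m t x - poison m t y = had (onesVec d - m) (x - y) := by
  ext j
  simp only [poison, had, onesVec, PiLp.add_apply, PiLp.sub_apply]
  ring

lemma poison_sub (m t x y : EuclideanSpace ℝ (Fin d)) :
    poison m t x - y = had (onesVec d - m) (x - y) + had m (t - y) := by
  ext j
  simp only [poison, had, onesVec, PiLp.add_apply, PiLp.sub_apply]
  ring

lemma inner_had_one_sub_had_eq_zero {m : EuclideanSpace ℝ (Fin d)}
    (hm : ∀ j, m j = 0 ∨ m j = 1) (u v : EuclideanSpace ℝ (Fin d)) :
    inner ℝ (had (onesVec d - m) u) (had m v) = 0 := by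
  rw [PiLp.inner_apply]
  refine Finset.sum_eq_zero fun j _ => ?_
  rcases hm j with h | h <;> simp [had, onesVec, h]

lemma norm_sq_lt_norm_add_sq_of_inner_eq_zero {E : Type*} [NormedAddCommGroup E]
    [InnerProductSpace ℝ E] {a c : E} (horth : inner ℝ a c = 0) (hc : c ≠ 0) :
    ‖a‖ ^ 2 < ‖a + c‖ ^ 2 := by
  rw [norm_add_sq_real, horth]
  have : 0 < ‖c‖ ^ 2 := pow_pos (norm_pos_iff.mpr hc) 2
  linarith

end Poisoning

theorem kernel_poisoned_gt_benign_general (d : ℕ) (γ : ℝ) (hγ : 0 < γ)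
    (x xi t m : EuclideanSpace ℝ (Fin d))
    (hm : ∀ j, m j = 0 ∨ m j = 1)
    (hδ : had m (t - xi) ≠ 0) :
    Real.exp (-2 * γ * ‖(had (onesVec d - m) x + had m t) -
        (had (onesVec d - m) xi + had m t)‖ ^ 2) >
      Real.exp (-2 * γ * ‖(had (onesVec d - m) x + had m t) - xi‖ ^ 2) := by
  change Real.exp (-2 * γ * ‖poison m t x - poison m t xi‖ ^ 2) >
    Real.exp (-2 * γ * ‖poison m t x - xi‖ ^ 2)
  have hdist : ‖poison m t x - poison m t xi‖ ^ 2 < ‖poison m t x - xi‖ ^ 2 := by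
    rw [poison_sub_poison, poison_sub]
    exact norm_sq_lt_norm_add_sq_of_inner_eq_zero (inner_had_one_sub_had_eq_zero hm _ _) hδ
  exact Real.exp_lt_exp.mpr (by nlinarith)

theorem kernel_poisoned_gt_benign (d : ℕ) (hd : 0 < d) (γ : ℝ) (hγ : 0 < γ)
    (x xi t m : EuclideanSpace ℝ (Fin d))
    (hm : ∀ j, m j = 0 ∨ m j = 1)
    (hδ : had m (t - xi) ≠ 0) :
    Real.exp (-2 * γ * ‖(had (onesVec d - m) x + had m t) -
        (had (onesVec d - m) xi + had m t)‖ ^ 2) >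
      Real.exp (-2 * γ * ‖(had (onesVec d - m) x + had m t) - xi‖ ^ 2) :=
  kernel_poisoned_gt_benign_general d γ hγ x xi t m hm hδ
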